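/- arXiv:1605.05121 — 3 statements merged into one kernel-verified Lean document; each statement's English description precedes it below -/
import Mathlib

section
/- For every constant c_1 > 1/2 there exists N such that for all n ≥ N, every set of at least c_1 · n · log₂(n) unit vectors in R^n is selectively balancing. -/
/-!
Consider the `2^m` signed sums `∑ ±uᵢ`. Their squared norms average `m`, so by Markov's
inequality at least half of them lie in the ball of radius `√(2m)`. If the `uᵢ` are not
selectively balancing, two distinct signed sums are at distance at least `2`, since half
their difference has coefficients in `{-1, 0, 1}`. The unit balls around them are then
disjoint and contained in the ball of radius `√(2m) + 1`, so comparing volumes gives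
`2^(m-1) ≤ (√(2m) + 1)^n`. This fails once `m ≥ c₁ n log₂ n` with `c₁ > 1/2` and `n` large.
-/

open Finset Filter MeasureTheory Metric Module Real

def SelectivelyBalancing {n m : ℕ} (u : Fin m → EuclideanSpace ℝ (Fin n)) : Prop :=
  ∃ ε : Fin m → ℝ, (∀ i, ε i = -1 ∨ ε i = 0 ∨ ε i = 1) ∧ ε ≠ 0 ∧
    ‖∑ i, ε i • u i‖ < 1

theorem card_le_add_one_pow_finrank_of_two_le_dist {E ι : Type*} [NormedAddCommGroup E]
    [NormedSpace ℝ E] [FiniteDimensional ℝ E] (s : Finset ι) (x : ι → E)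
    (hsep : (s : Set ι).Pairwise fun i j => 2 ≤ dist (x i) (x j)) {r : ℝ} (hr₀ : 0 ≤ r)
    (hr : ∀ i ∈ s, ‖x i‖ ≤ r) :
    (#s : ℝ) ≤ (r + 1) ^ finrank ℝ E := by
  borelize E
  let μ : Measure E := Measure.addHaar
  have hdisj : (s : Set ι).PairwiseDisjoint fun i => ball (x i) 1 :=
    fun i hi j hj hij => ball_disjoint_ball (by linarith [hsep hi hj hij])
  have hsub : (⋃ i ∈ s, ball (x i) 1) ⊆ closedBall 0 (r + 1) := by
    refine Set.iUnion₂_subset fun i hi y hy => ?_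
    rw [mem_closedBall, dist_zero_right]
    linarith [norm_le_norm_add_norm_sub' y (x i), hr i hi, (mem_ball_iff_norm.1 hy).le]
  have hvol : #s * μ (ball 0 1) ≤ ENNReal.ofReal ((r + 1) ^ finrank ℝ E) * μ (ball 0 1) :=
    calc #s * μ (ball 0 1) = ∑ i ∈ s, μ (ball (x i) 1) := by
          simp [Measure.addHaar_ball_center]
      _ = μ (⋃ i ∈ s, ball (x i) 1) :=
          (measure_biUnion_finset hdisj fun _ _ => measurableSet_ball).symm
      _ ≤ μ (closedBall 0 (r + 1)) := measure_mono hsub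
      _ = _ := Measure.addHaar_closedBall μ 0 (by linarith)
  have hcard := (ENNReal.mul_le_mul_iff_left (measure_ball_pos μ 0 one_pos).ne'
    measure_ball_lt_top.ne).1 hvol
  simpa [ENNReal.toReal_ofReal (by positivity : (0:ℝ) ≤ (r + 1) ^ finrank ℝ E)] using
    ENNReal.toReal_mono ENNReal.ofReal_ne_top hcard

theorem card_le_two_mul_card_filter_le {α : Type*} (s : Finset α) {f : α → ℝ} {a : ℝ}
    (ha : 0 < a) (hf : ∀ x ∈ s, 0 ≤ f x) (hsum : ∑ x ∈ s, f x ≤ #s * a) :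
    (#s : ℝ) ≤ 2 * #{x ∈ s | f x ≤ 2 * a} := by
  have hsplit : (#{x ∈ s | f x ≤ 2 * a} : ℝ) + #{x ∈ s | ¬ f x ≤ 2 * a} = #s := by
    exact_mod_cast card_filter_add_card_filter_not (s := s) (fun x => f x ≤ 2 * a)
  have hlarge : #{x ∈ s | ¬ f x ≤ 2 * a} * (2 * a) ≤ #s * a :=
    calc #{x ∈ s | ¬ f x ≤ 2 * a} * (2 * a) ≤ ∑ x ∈ s with ¬ f x ≤ 2 * a, f x := by
          simpa using card_nsmul_le_sum _ f _ fun x hx => (not_le.1 (mem_filter.1 hx).2).le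
      _ ≤ ∑ x ∈ s, f x := sum_le_sum_of_subset_of_nonneg (filter_subset _ _) fun x hx _ => hf x hx
      _ ≤ #s * a := hsum
  nlinarith

noncomputable def boolSign : Bool → ℝ
  | true => 1
  | false => -1

theorem boolSign_mul_self (b : Bool) : boolSign b * boolSign b = 1 := by
  cases b <;> norm_num [boolSign]

theorem boolSign_sub_div_two_eq_neg_one_or_zero_or_one (a b : Bool) :
    (boolSign a - boolSign b) / 2 = -1 ∨ (boolSign a - boolSign b) / 2 = 0 ∨
      (boolSign a - boolSign b) / 2 = 1 := by
  cases a <;> cases b <;> norm_num [boolSign]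

theorem boolSign_sub_div_two_eq_zero_iff {a b : Bool} :
    (boolSign a - boolSign b) / 2 = 0 ↔ a = b := by
  cases a <;> cases b <;> norm_num [boolSign]

section SignSums

variable {ι E : Type*} [Fintype ι] [NormedAddCommGroup E] [InnerProductSpace ℝ E]

noncomputable def signSum (u : ι → E) (σ : ι → Bool) : E := ∑ i, boolSign (σ i) • u i

theorem sum_boolSign_mul_boolSign [DecidableEq ι] (i j : ι) :
    ∑ σ : ι → Bool, boolSign (σ i) * boolSign (σ j) = if i = j then 2 ^ Fintype.card ι else 0 := by
  split_ifs with hij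
  · subst hij
    simp [boolSign_mul_self]
  · -- flipping the sign at `j` negates every term
    refine sum_ninvolution (fun σ => Function.update σ j !(σ j)) (fun σ => ?_) (fun σ _ => ?_)
      (fun _ => mem_univ _) (fun σ => by simp)
    · simp only [Function.update_of_ne hij, Function.update_self]
      cases σ i <;> cases σ j <;> norm_num [boolSign]
    · simpa [funext_iff] using ⟨j, by simp⟩

theorem sum_norm_signSum_sq [DecidableEq ι] (u : ι → E) :
    ∑ σ : ι → Bool, ‖signSum u σ‖ ^ 2 = 2 ^ Fintype.card ι * ∑ i, ‖u i‖ ^ 2 :=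
  calc ∑ σ : ι → Bool, ‖signSum u σ‖ ^ 2
      = ∑ i, ∑ j, (∑ σ : ι → Bool, boolSign (σ i) * boolSign (σ j)) * inner ℝ (u i) (u j) := by
        simp_rw [← real_inner_self_eq_norm_sq, signSum, sum_inner, inner_sum,
          real_inner_smul_left, real_inner_smul_right, ← mul_assoc, sum_mul]
        rw [sum_comm]
        exact sum_congr rfl fun _ _ => sum_comm
    _ = 2 ^ Fintype.card ι * ∑ i, ‖u i‖ ^ 2 := by
        simp [sum_boolSign_mul_boolSign, ite_mul, mul_sum]

end SignSums

theorem SelectivelyBalancing.of_dist_signSum_lt_two {n m : ℕ}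
    (u : Fin m → EuclideanSpace ℝ (Fin n)) {σ τ : Fin m → Bool} (hne : σ ≠ τ)
    (h : dist (signSum u σ) (signSum u τ) < 2) : SelectivelyBalancing u := by
  refine ⟨fun i => (boolSign (σ i) - boolSign (τ i)) / 2,
    fun i => boolSign_sub_div_two_eq_neg_one_or_zero_or_one _ _, fun h0 => hne ?_, ?_⟩
  · exact funext fun i => boolSign_sub_div_two_eq_zero_iff.1 (congrFun h0 i)
  · have : ∑ i, ((boolSign (σ i) - boolSign (τ i)) / 2) • u i
        = (2⁻¹ : ℝ) • (signSum u σ - signSum u τ) := by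
      simp only [signSum, smul_sum, ← sum_sub_distrib, smul_smul, ← sub_smul]
      congr! 2
      ring
    rw [this, norm_smul, ← dist_eq_norm, norm_inv, Real.norm_two]
    linarith

theorem monotoneOn_sub_mul_log {c : ℝ} (hc : 0 < c) :
    MonotoneOn (fun x => x - c * log x) (Set.Ici c) := by
  intro x hx y hy hxy
  simp only [Set.mem_Ici] at hx hy
  have hx₀ : 0 < x := hc.trans_le hx
  have hy₀ : 0 < y := hx₀.trans_le hxy
  have hlog : log y - log x ≤ y / x - 1 := by
    rw [← log_div (by positivity) hx₀.ne']
    exact log_le_sub_one_of_pos (by positivity)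
  have hratio : c * (y / x - 1) ≤ y - x := by
    rw [div_sub_one hx₀.ne', mul_div_assoc', div_le_iff₀ hx₀]
    nlinarith
  nlinarith

theorem eventually_logb_add_lt_mul (b C : ℝ) {a : ℝ} (ha : 0 < a) :
    ∀ᶠ x in atTop, logb b x + C < a * x := by
  have hsmall : (fun x => logb b x + C) =o[atTop] id :=
    isLittleO_logb_id_atTop.add (Asymptotics.isLittleO_const_id_atTop C)
  filter_upwards [hsmall.bound (half_pos ha), eventually_gt_atTop 0] with x hx hx₀
  rw [norm_eq_abs, id, norm_of_nonneg hx₀.le] at hx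
  linarith [le_abs_self (logb b x + C), mul_pos ha hx₀]

theorem two_mul_pow_lt_two_pow {n m : ℕ} (h : 1 + n / 2 * logb 2 (6 * m) < m) :
    2 * (√(2 * m) + 1) ^ n < 2 ^ m := by
  have hm : (1 : ℝ) ≤ m := by
    obtain rfl | hm₀ := m.eq_zero_or_pos
    · norm_num at h
    · exact_mod_cast hm₀
  have hsq : (√(2 * m) + 1) ^ 2 ≤ 6 * m := by
    nlinarith [sq_sqrt (by positivity : (0 : ℝ) ≤ 2 * m), sq_nonneg (√(2 * m) - 1)]
  have hlogb : n * logb 2 (√(2 * m) + 1) ≤ n / 2 * logb 2 (6 * m) := by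
    have := logb_le_logb_of_le one_lt_two (by positivity) hsq
    rw [logb_pow, Nat.cast_ofNat] at this
    nlinarith [(Nat.cast_nonneg n : (0 : ℝ) ≤ n)]
  rw [← logb_lt_logb_iff one_lt_two (by positivity) (by positivity), logb_mul two_ne_zero
    (by positivity), logb_pow, logb_pow, logb_self_eq_one one_lt_two]
  linarith

theorem eventually_forall_two_mul_pow_lt {c : ℝ} (hc : 1 / 2 < c) :
    ∀ᶠ n : ℕ in atTop, ∀ m : ℕ, c * n * logb 2 n ≤ m → 2 * (√(2 * m) + 1) ^ n < 2 ^ m := by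
  have hc₀ : 0 < c := by linarith
  have hlogb : Tendsto (fun n : ℕ => logb 2 n) atTop atTop :=
    (tendsto_logb_atTop one_lt_two).comp tendsto_natCast_atTop_atTop
  filter_upwards [hlogb.eventually (eventually_logb_add_lt_mul 2 (2 + logb 2 (6 * c))
      (by linarith : 0 < 2 * (c - 1 / 2))),
    hlogb.eventually (eventually_ge_atTop c⁻¹), eventually_ge_atTop 1] with n hL hLc hn m hm
  set L := logb 2 n
  have hn' : (1 : ℝ) ≤ n := by exact_mod_cast hn
  have hL₀ : 0 < L := (inv_pos.2 hc₀).trans_le hLc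
  have hnM : (n : ℝ) ≤ c * n * L := by
    have : 1 ≤ c * L := by rwa [inv_le_iff_one_le_mul₀ hc₀, mul_comm] at hLc
    nlinarith
  refine two_mul_pow_lt_two_pow ?_
  -- `x ↦ x - n / 2 * logb 2 x` is increasing on `[n, ∞)` because `2 * log 2 > 1`
  have hcoef : (n : ℝ) / (2 * log 2) ≤ n := by
    rw [div_le_iff₀ (by positivity)]
    nlinarith [log_two_gt_d9]
  have hmono := monotoneOn_sub_mul_log (c := n / (2 * log 2)) (by positivity)
    (hcoef.trans hnM) (hcoef.trans (hnM.trans hm)) hm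
  have hlogbM : logb 2 (c * n * L) = logb 2 c + L + logb 2 L := by
    rw [logb_mul (by positivity) hL₀.ne', logb_mul hc₀.ne' (by positivity)]
  have hlogb6 : logb 2 (6 * c) = logb 2 6 + logb 2 c := logb_mul (by norm_num) hc₀.ne'
  have hconv : ∀ x, n / (2 * log 2) * log x = n / 2 * logb 2 x := fun x => by
    rw [logb]; ring
  simp only [hconv, hlogbM] at hmono
  rw [logb_mul (by norm_num) (by linarith)]
  rw [hlogb6] at hL
  -- at `x = c * n * L` the slack is `n * ((c - 1/2) * L - (logb 2 (6 * c) + logb 2 L) / 2) > n`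
  nlinarith [mul_nonneg (sub_nonneg.2 hn') (sub_nonneg.2 hL.le)]

theorem selectivelyBalancing_of_two_mul_pow_lt {n m : ℕ} {u : Fin m → EuclideanSpace ℝ (Fin n)}
    (hu : ∀ i, ‖u i‖ = 1) (h : 2 * (√(2 * m) + 1) ^ n < 2 ^ m) : SelectivelyBalancing u := by
  obtain rfl | hm := m.eq_zero_or_pos
  · exact absurd h (by norm_num)
  by_contra hsb
  set A := ({σ | ‖signSum u σ‖ ^ 2 ≤ 2 * m} : Finset (Fin m → Bool))
  have hA : (2 : ℝ) ^ m ≤ 2 * #A := by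
    simpa [card_univ] using
      card_le_two_mul_card_filter_le univ (f := fun σ => ‖signSum u σ‖ ^ 2) (a := m)
        (by positivity) (fun _ _ => sq_nonneg _) (by simp [sum_norm_signSum_sq, hu, card_univ])
  have hsep : (A : Set (Fin m → Bool)).Pairwise fun σ τ => 2 ≤ dist (signSum u σ) (signSum u τ) :=
    fun σ _ τ _ hne => not_lt.1 fun hlt => hsb (.of_dist_signSum_lt_two u hne hlt)
  have hpack := card_le_add_one_pow_finrank_of_two_le_dist A _ hsep (sqrt_nonneg _)
    fun σ hσ => abs_le_sqrt (mem_filter.1 hσ).2 |>.trans' (le_abs_self _)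
  rw [finrank_euclideanSpace_fin] at hpack
  linarith

/-- for `c₁ > 1/2` and large `n`, any `≥ c₁ n log₂ n` unit vectors
in `ℝ^n` are selectively balancing. -/
theorem selBal_upper (c₁ : ℝ) (hc₁ : 1 / 2 < c₁) :
    ∃ N : ℕ, ∀ n ≥ N, ∀ m : ℕ, c₁ * n * Real.logb 2 n ≤ m →
      ∀ u : Fin m → EuclideanSpace ℝ (Fin n), (∀ i, ‖u i‖ = 1) →
        SelectivelyBalancing u := by
  obtain ⟨N, hN⟩ := eventually_atTop.1 (eventually_forall_two_mul_pow_lt hc₁)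
  exact ⟨N, fun n hn m hm u hu => selectivelyBalancing_of_two_mul_pow_lt hu (hN n hn m hm)⟩
end

section
/- Let S ⊂ Z^d be in strictly convex position, T ⊂ Z^d finite nonempty, and ε: T → {−1, 1}. Then the vector w = ∑_{t∈T} ε(t) ∑_{y∈S} e_{t+y} ∈ R^{Z^d} has at least |S| coordinates in which it equals ±1. -/
/-!
A linear functional `φ` that singles out `y ∈ S` as the unique maximiser on `S` (it exists by
Hahn–Banach, since `y` is not in the convex hull of the other points) makes `t₀ + y` a lonely point
of `T + S` when `t₀` maximises `φ` on `T`: any other representation `t + y'` has smaller `φ`-value.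
At a lonely point the coordinate of `w` is `ε t₀ = ±1`, and distinct `y` give distinct lonely points.
-/

theorem Set.Finite.exists_forall_lt_of_notMem_convexHull {E : Type*} [TopologicalSpace E]
    [AddCommGroup E] [Module ℝ E] [IsTopologicalAddGroup E] [ContinuousSMul ℝ E]
    [LocallyConvexSpace ℝ E] [T2Space E] {s : Set E} (hs : s.Finite) {x : E}
    (hx : x ∉ convexHull ℝ s) : ∃ f : StrongDual ℝ E, ∀ z ∈ s, f z < f x := by
  obtain ⟨f, u, hfu, hux⟩ := geometric_hahn_banach_closed_point (convex_convexHull ℝ s)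
    (hs.isCompact_convexHull ℝ).isClosed hx
  exact ⟨f, fun z hz => (hfu z (subset_convexHull ℝ s hz)).trans hux⟩

theorem exists_uniqueAdd_of_forall_lt {G α : Type*} [Add G] [IsRightCancelAdd G]
    [AddCommMonoid α] [LinearOrder α] [IsOrderedCancelAddMonoid α] (φ : G →ₙ+ α)
    {T S : Finset G} (hT : T.Nonempty) {y₀ : G} (hy₀ : ∀ y ∈ S, y ≠ y₀ → φ y < φ y₀) :
    ∃ t₀ ∈ T, UniqueAdd T S t₀ y₀ := by
  obtain ⟨t₀, ht₀, hmax⟩ := T.exists_max_image φ hT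
  refine ⟨t₀, ht₀, fun t y ht hy hsum => ?_⟩
  have hy : y = y₀ := by
    by_contra hne
    have hlt : φ t + φ y < φ t₀ + φ y₀ := add_lt_add_of_le_of_lt (hmax t ht) (hy₀ y hy hne)
    rw [← map_add, ← map_add, hsum] at hlt
    exact lt_irrefl _ hlt
  subst hy
  exact ⟨add_right_cancel hsum, rfl⟩

section LonelyPoints

variable {G R : Type*} [Add G] {T S : Finset G}

theorem sum_smul_sum_single_apply_of_uniqueAdd [Semiring R] (ε : G → R) {t₀ y₀ : G}
    (ht₀ : t₀ ∈ T) (hy₀ : y₀ ∈ S) (h : UniqueAdd T S t₀ y₀) :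
    (∑ t ∈ T, ε t • ∑ y ∈ S, Finsupp.single (t + y) (1 : R)) (t₀ + y₀) = ε t₀ := by
  classical
  rw [Finsupp.finsetSum_apply, Finset.sum_eq_single_of_mem t₀ ht₀]
  · rw [Finsupp.smul_apply, Finsupp.finsetSum_apply, Finset.sum_eq_single_of_mem y₀ hy₀,
      Finsupp.single_eq_same, smul_eq_mul, mul_one]
    exact fun y hy hne => Finsupp.single_eq_of_ne fun hsum => hne (h ht₀ hy hsum.symm).2
  · intro t ht hne
    rw [Finsupp.smul_apply, Finsupp.finsetSum_apply, Finset.sum_eq_zero, smul_zero]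
    exact fun y hy => Finsupp.single_eq_of_ne fun hsum => hne (h ht hy hsum.symm).1

theorem card_le_ncard_of_forall_exists_uniqueAdd [Ring R] [Nontrivial R] {ε : G → R}
    (hε : ∀ t ∈ T, ε t = 1 ∨ ε t = -1) (hS : ∀ y ∈ S, ∃ t ∈ T, UniqueAdd T S t y) :
    S.card ≤ {x : G |
      (∑ t ∈ T, ε t • ∑ y ∈ S, Finsupp.single (t + y) (1 : R)) x = 1 ∨
      (∑ t ∈ T, ε t • ∑ y ∈ S, Finsupp.single (t + y) (1 : R)) x = -1}.ncard := by
  choose! g hgT hg using hS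
  set w := ∑ t ∈ T, ε t • ∑ y ∈ S, Finsupp.single (t + y) (1 : R) with hw
  have hfin : {x : G | w x = 1 ∨ w x = -1}.Finite :=
    w.support.finite_toSet.subset fun x hx => by
      rcases hx with hx | hx <;> simp [hx]
  rw [← Set.ncard_coe_finset]
  refine Set.ncard_le_ncard_of_injOn (fun y => g y + y) (fun y hy => ?_) ?_ hfin
  · rw [Set.mem_ofPred_eq, hw, sum_smul_sum_single_apply_of_uniqueAdd ε (hgT y hy) hy (hg y hy)]
    exact hε _ (hgT y hy)
  · intro a ha b hb hab
    exact (hg b hb (hgT a ha) ha hab).2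

end LonelyPoints

/-- if `S ⊂ ℤ^d` is in strictly convex position and
`ε : T → {-1,1}`, then `w = ∑_{t∈T} ε(t) ∑_{y∈S} e_{t+y}` has at least `|S|`
coordinates equal to `±1`. -/
theorem many_pm_one_coords {d : ℕ} (S T : Finset (Fin d → ℤ))
    (hS : ∀ y ∈ S, (fun i => (y i : ℝ)) ∉
      convexHull ℝ {z : Fin d → ℝ | ∃ y' ∈ S, y' ≠ y ∧ z = fun i => (y' i : ℝ)})
    (hT : T.Nonempty) (ε : (Fin d → ℤ) → ℝ)
    (hε : ∀ t ∈ T, ε t = 1 ∨ ε t = -1) :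
    S.card ≤ {x : Fin d → ℤ |
      (∑ t ∈ T, ε t • ∑ y ∈ S, Finsupp.single (t + y) (1 : ℝ)) x = 1 ∨
      (∑ t ∈ T, ε t • ∑ y ∈ S, Finsupp.single (t + y) (1 : ℝ)) x = -1}.ncard := by
  refine card_le_ncard_of_forall_exists_uniqueAdd hε fun y hy => ?_
  let c : (Fin d → ℤ) →+ (Fin d → ℝ) := (Int.castAddHom ℝ).compLeft (Fin d)
  have hfin : {z : Fin d → ℝ | ∃ y' ∈ S, y' ≠ y ∧ z = fun i => (y' i : ℝ)}.Finite :=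
    (S.finite_toSet.image c).subset fun _ ⟨y', hy', _, hz⟩ => ⟨y', hy', hz.symm⟩
  obtain ⟨f, hf⟩ := hfin.exists_forall_lt_of_notMem_convexHull (hS y hy)
  exact exists_uniqueAdd_of_forall_lt (f.toLinearMap.toAddMonoidHom.comp c).toAddHom hT
    fun y' hy' hne => hf _ ⟨y', hy', hne, rfl⟩
end

section
/- Let v = v_0 + v_1 + ⋯ + v_j in R^N, where for each i ≤ j every coordinate of v_i is an integer multiple of 2^{−i}, and v_j has at least 4^j coordinates equal to ±2^{−j}. Then ‖v‖ ≥ 1 in the Euclidean norm. -/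
/-!
Scale every coordinate by `2^j`. Each `2^j v_i` with `i < j` is integral and even, while on the
`4^j` special coordinates `2^j v_j = ±1` is odd; so there `2^j v` is an odd integer and
`|v_x| ≥ 2^{-j}`. Summing squares over those coordinates gives `‖v‖² ≥ 4^j · 4^{-j} = 1`.
-/

open Finset

theorem odd_sum_of_odd_last_of_even {n : ℕ} (m : Fin (n + 1) → ℤ)
    (hlast : Odd (m (Fin.last n))) (hinit : ∀ i : Fin n, Even (m i.castSucc)) :
    Odd (∑ i, m i) := by
  rw [Fin.sum_univ_castSucc]
  exact (even_sum _ fun i _ => hinit i).add_odd hlast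

theorem Int.odd_of_cast_mul_eq_or_eq_neg {c : ℝ} (hc : c ≠ 0) {m : ℤ}
    (h : (m : ℝ) * c = c ∨ (m : ℝ) * c = -c) : Odd m := by
  rcases h with h | h
  · have : (m : ℝ) = 1 := mul_right_cancel₀ hc (h.trans (one_mul c).symm)
    rw [show m = 1 by exact_mod_cast this]
    exact odd_one
  · have : (m : ℝ) = -1 := mul_right_cancel₀ hc (h.trans (neg_one_mul c).symm)
    rw [show m = -1 by exact_mod_cast this]
    exact odd_neg_one

theorem abs_le_abs_int_mul_of_ne_zero (c : ℝ) {M : ℤ} (hM : M ≠ 0) : |c| ≤ |(M : ℝ) * c| := by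
  rw [abs_mul, ← Int.cast_abs]
  exact le_mul_of_one_le_left (abs_nonneg c) (by exact_mod_cast Int.one_le_abs hM)

theorem sum_int_mul_two_zpow_neg (j : ℕ) (m : Fin (j + 1) → ℤ) :
    ∑ i, (m i : ℝ) * 2 ^ (-(i.val : ℤ)) =
      ((∑ i, m i * 2 ^ (j - i.val) : ℤ) : ℝ) * 2 ^ (-(j : ℤ)) := by
  push_cast
  rw [sum_mul]
  refine sum_congr rfl fun i _ => ?_
  rw [mul_assoc, ← zpow_natCast, ← zpow_add₀ two_ne_zero]
  congr 2
  have := i.is_le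
  omega

theorem two_zpow_neg_le_abs_sum_int_mul_two_zpow_neg {j : ℕ} (m : Fin (j + 1) → ℤ)
    (hlast : Odd (m (Fin.last j))) :
    (2 : ℝ) ^ (-(j : ℤ)) ≤ |∑ i, (m i : ℝ) * 2 ^ (-(i.val : ℤ))| := by
  rw [sum_int_mul_two_zpow_neg]
  have hodd : Odd (∑ i, m i * 2 ^ (j - i.val)) := by
    refine odd_sum_of_odd_last_of_even _ (by simpa using hlast) fun i => ?_
    exact (Int.even_pow.mpr ⟨even_two, by have := i.is_lt; rw [Fin.val_castSucc]; omega⟩).mul_left _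
  have hne : ∑ i, m i * 2 ^ (j - i.val) ≠ 0 := by
    intro h
    rw [h] at hodd
    exact Int.not_odd_zero hodd
  calc (2 : ℝ) ^ (-(j : ℤ)) = |(2 : ℝ) ^ (-(j : ℤ))| := (abs_of_pos (zpow_pos two_pos _)).symm
    _ ≤ _ := abs_le_abs_int_mul_of_ne_zero _ hne

theorem EuclideanSpace.card_mul_sq_le_norm_sq {ι : Type*} [Fintype ι]
    (w : EuclideanSpace ℝ ι) (s : Finset ι) {c : ℝ} (hc0 : 0 ≤ c) (hc : ∀ x ∈ s, c ≤ |w x|) :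
    s.card * c ^ 2 ≤ ‖w‖ ^ 2 := by
  rw [EuclideanSpace.norm_sq_eq]
  calc (s.card : ℝ) * c ^ 2 = ∑ _x ∈ s, c ^ 2 := by rw [sum_const, nsmul_eq_mul]
    _ ≤ ∑ x ∈ s, ‖w x‖ ^ 2 := sum_le_sum fun x hx => by
        rw [Real.norm_eq_abs]; exact pow_le_pow_left₀ hc0 (hc x hx) 2
    _ ≤ ∑ x, ‖w x‖ ^ 2 := sum_le_sum_of_subset_of_nonneg (subset_univ _) fun _ _ _ => by positivity

/-- if `v = v_0 + ⋯ + v_j` where every coordinate of `v_i` is an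
integer multiple of `2^{-i}`, and `v_j` equals `±2^{-j}` in at least `4^j`
coordinates, then `‖v‖ ≥ 1`. -/
theorem norm_sum_ge_one {N j : ℕ} (v : Fin (j + 1) → EuclideanSpace ℝ (Fin N))
    (hmul : ∀ i : Fin (j + 1), ∀ x, ∃ m : ℤ, v i x = (m : ℝ) * (2 : ℝ) ^ (-(i.val : ℤ)))
    (hbig : 4 ^ j ≤ {x : Fin N |
        v (Fin.last j) x = (2 : ℝ) ^ (-(j : ℤ)) ∨
        v (Fin.last j) x = -(2 : ℝ) ^ (-(j : ℤ))}.ncard) :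
    1 ≤ ‖∑ i, v i‖ := by
  classical
  set S := {x : Fin N | v (Fin.last j) x = (2 : ℝ) ^ (-(j : ℤ)) ∨
    v (Fin.last j) x = -(2 : ℝ) ^ (-(j : ℤ))}
  have hcoord : ∀ x ∈ S.toFinset, (2 : ℝ) ^ (-(j : ℤ)) ≤ |(∑ i, v i) x| := by
    intro x hx
    choose m hm using fun i => hmul i x
    have hxS : x ∈ S := Set.mem_toFinset.mp hx
    rw [Set.mem_ofPred_eq, hm, Fin.val_last] at hxS
    have hlast : Odd (m (Fin.last j)) := Int.odd_of_cast_mul_eq_or_eq_neg (by positivity) hxS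
    simpa [WithLp.ofLp_sum, hm] using two_zpow_neg_le_abs_sum_int_mul_two_zpow_neg m hlast
  have hnorm := EuclideanSpace.card_mul_sq_le_norm_sq _ _ (by positivity) hcoord
  rw [← Set.ncard_eq_toFinset_card'] at hnorm
  have hsq : (1 : ℝ) ≤ ‖∑ i, v i‖ ^ 2 :=
    calc (1 : ℝ) = 4 ^ j * ((2 : ℝ) ^ (-(j : ℤ))) ^ 2 := by
          rw [zpow_neg, zpow_natCast, inv_pow, ← pow_mul, mul_comm j, pow_mul]; norm_num
      _ ≤ S.ncard * ((2 : ℝ) ^ (-(j : ℤ))) ^ 2 := by gcongr; exact_mod_cast hbig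
      _ ≤ ‖∑ i, v i‖ ^ 2 := hnorm
  exact (one_le_sq_iff₀ (norm_nonneg _)).mp hsq
end
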